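/- For finitely-supported random variables S, T, Y^N, Z^N with S independent of T, (1/N) H(S|Z^N) ≤ (1/N) I(S;Y^N|T) − (1/N) I(S;Z^N|T) + (1/N) H(S,T|Y^N) + (1/N) H(T|Z^N). -/

import Mathlib

open Finset Real

section IT

variable {Ω : Type*} [Fintype Ω]

/-- A probability mass function on a finite sample space. -/
def IsPmf (μ : Ω → ℝ) : Prop := (∀ ω, 0 ≤ μ ω) ∧ ∑ ω, μ ω = 1

/-- Probability that the random variable `X` takes the value `x`. -/
noncomputable def pr (μ : Ω → ℝ) {α : Type*} [DecidableEq α] (X : Ω → α) (x : α) : ℝ :=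
  ∑ ω, if X ω = x then μ ω else 0

/-- Shannon entropy (in nats) of a finitely-valued random variable. -/
noncomputable def ent (μ : Ω → ℝ) {α : Type*} [Fintype α] [DecidableEq α] (X : Ω → α) : ℝ :=
  ∑ x, Real.negMulLog (pr μ X x)

/-- Conditional Shannon entropy `H(X | Y)`. -/
noncomputable def condEnt (μ : Ω → ℝ) {α β : Type*} [Fintype α] [DecidableEq α]
    [Fintype β] [DecidableEq β] (X : Ω → α) (Y : Ω → β) : ℝ :=
  ent μ (fun ω => (X ω, Y ω)) - ent μ Y

/-- Mutual information `I(X;Y)`. -/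
noncomputable def mi (μ : Ω → ℝ) {α β : Type*} [Fintype α] [DecidableEq α]
    [Fintype β] [DecidableEq β] (X : Ω → α) (Y : Ω → β) : ℝ :=
  ent μ X + ent μ Y - ent μ (fun ω => (X ω, Y ω))

/-- Conditional mutual information `I(X;Y|W)`. -/
noncomputable def cmi (μ : Ω → ℝ) {α β γ : Type*} [Fintype α] [DecidableEq α]
    [Fintype β] [DecidableEq β] [Fintype γ] [DecidableEq γ]
    (X : Ω → α) (Y : Ω → β) (W : Ω → γ) : ℝ :=
  condEnt μ X W + condEnt μ Y W - condEnt μ (fun ω => (X ω, Y ω)) W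

/-- Independence of two finitely-valued random variables. -/
def IndepRV (μ : Ω → ℝ) {α β : Type*} [DecidableEq α] [DecidableEq β]
    (X : Ω → α) (Y : Ω → β) : Prop :=
  ∀ x y, pr μ (fun ω => (X ω, Y ω)) (x, y) = pr μ X x * pr μ Y y

/-- `X` is uniformly distributed over its (finite) alphabet. -/
def UniformRV (μ : Ω → ℝ) {α : Type*} [Fintype α] [DecidableEq α] (X : Ω → α) : Prop :=
  ∀ x, pr μ X x = 1 / Fintype.card α

/-- Markov chain `X → Y → Z`. -/
def MarkovRV (μ : Ω → ℝ) {α β γ : Type*} [DecidableEq α] [DecidableEq β] [DecidableEq γ]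
    (X : Ω → α) (Y : Ω → β) (Z : Ω → γ) : Prop :=
  ∀ x y z, pr μ (fun ω => (X ω, Y ω, Z ω)) (x, y, z) * pr μ Y y =
    pr μ (fun ω => (X ω, Y ω)) (x, y) * pr μ (fun ω => (Y ω, Z ω)) (y, z)

/-- Binary entropy function (in nats), with the convention `0 log 0 = 0`. -/
noncomputable def binEnt (x : ℝ) : ℝ := Real.negMulLog x + Real.negMulLog (1 - x)

end IT


/-!
All four terms are differences of joint entropies. The identity
`H(S|Z) + I(S;Z|T) = H(S|T) + I(S;T|Z)` and the chain rule `H(S|T) = I(S;Y|T) + H(S|Y,T)` only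
regroup coordinates of tuples, which does not change entropy; the two bounds
`H(S|Y,T) ≤ H(S,T|Y)` and `I(S;T|Z) ≤ H(T|Z)` come from the monotonicity `H(A) ≤ H(A,B)`.
-/

lemma Real.negMulLog_sum_le {ι : Type*} (s : Finset ι) (f : ι → ℝ) (hf : ∀ i ∈ s, 0 ≤ f i) :
    negMulLog (∑ i ∈ s, f i) ≤ ∑ i ∈ s, negMulLog (f i) := by
  rw [negMulLog, neg_mul, Finset.sum_mul, ← Finset.sum_neg_distrib]
  refine Finset.sum_le_sum fun i hi => ?_
  rcases (hf i hi).eq_or_lt with h0 | h0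
  · simp [← h0]
  · have hlog := Real.log_le_log h0 (Finset.single_le_sum hf hi)
    rw [negMulLog]
    nlinarith [hf i hi]

section Entropy

variable {Ω : Type*} [Fintype Ω] (μ : Ω → ℝ)

lemma pr_nonneg (hμ : ∀ ω, 0 ≤ μ ω) {α : Type*} [DecidableEq α] (X : Ω → α) (x : α) :
    0 ≤ pr μ X x :=
  Finset.sum_nonneg fun ω _ => by split_ifs <;> simp [hμ ω]

lemma pr_eq_sum_pr_prod {α β : Type*} [DecidableEq α] [Fintype β] [DecidableEq β]
    (A : Ω → α) (B : Ω → β) (a : α) :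
    pr μ A a = ∑ b, pr μ (fun ω => (A ω, B ω)) (a, b) := by
  unfold pr
  rw [Finset.sum_comm]
  refine Finset.sum_congr rfl fun ω _ => ?_
  by_cases h : A ω = a <;> simp [h, Prod.ext_iff]

lemma pr_comp_of_injective {α β : Type*} [DecidableEq α] [DecidableEq β]
    (X : Ω → α) {g : α → β} (hg : g.Injective) (x : α) :
    pr μ (fun ω => g (X ω)) (g x) = pr μ X x := by
  simp only [pr, hg.eq_iff]

variable {α β γ : Type*} [Fintype α] [DecidableEq α] [Fintype β] [DecidableEq β]
  [Fintype γ] [DecidableEq γ]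

lemma ent_comp_equiv (X : Ω → α) (e : α ≃ β) : ent μ (fun ω => e (X ω)) = ent μ X := by
  rw [ent, ← e.sum_comp]
  simp only [pr_comp_of_injective μ X e.injective, ent]

variable (A : Ω → α) (B : Ω → β) (C : Ω → γ)

lemma ent_le_ent_prod (hμ : ∀ ω, 0 ≤ μ ω) : ent μ A ≤ ent μ (fun ω => (A ω, B ω)) := by
  rw [ent, ent, Fintype.sum_prod_type]
  refine Finset.sum_le_sum fun a _ => ?_
  rw [pr_eq_sum_pr_prod μ A B a]
  exact negMulLog_sum_le _ _ fun b _ => pr_nonneg μ hμ _ _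

lemma ent_prod_comm : ent μ (fun ω => (A ω, B ω)) = ent μ (fun ω => (B ω, A ω)) :=
  (ent_comp_equiv μ _ (Equiv.prodComm α β)).symm

lemma ent_prod_assoc :
    ent μ (fun ω => ((A ω, B ω), C ω)) = ent μ (fun ω => (A ω, (B ω, C ω))) :=
  (ent_comp_equiv μ _ (Equiv.prodAssoc α β γ)).symm

lemma ent_prod_right_comm :
    ent μ (fun ω => ((A ω, B ω), C ω)) = ent μ (fun ω => ((A ω, C ω), B ω)) := by
  rw [ent_prod_assoc, ent_prod_assoc]
  exact (ent_comp_equiv μ _ ((Equiv.refl α).prodCongr (Equiv.prodComm β γ))).symm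

lemma condEnt_eq_cmi_add_condEnt :
    condEnt μ A C = cmi μ A B C + condEnt μ A (fun ω => (B ω, C ω)) := by
  have := ent_prod_assoc μ A B C
  simp only [cmi, condEnt]
  linarith

lemma condEnt_add_cmi_swap :
    condEnt μ A B + cmi μ A B C = condEnt μ A C + cmi μ A C B := by
  have := ent_prod_comm μ B C
  have := ent_prod_right_comm μ A B C
  simp only [cmi, condEnt]
  linarith

lemma cmi_le_condEnt (hμ : ∀ ω, 0 ≤ μ ω) : cmi μ A B C ≤ condEnt μ B C := by
  have := ent_prod_right_comm μ A B C
  have := ent_le_ent_prod μ (fun ω => (A ω, C ω)) B hμ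
  simp only [cmi, condEnt]
  linarith

lemma condEnt_prod_le_condEnt_prod (hμ : ∀ ω, 0 ≤ μ ω) :
    condEnt μ A (fun ω => (B ω, C ω)) ≤ condEnt μ (fun ω => (A ω, C ω)) B := by
  have := ent_prod_right_comm μ A C B
  have := ent_prod_assoc μ A B C
  have := ent_le_ent_prod μ B C hμ
  simp only [condEnt]
  linarith

end Entropy

theorem stmt13_general {Ω : Type*} [Fintype Ω] {N : ℕ}
    {𝒮 𝒯 𝒴 𝒵 : Type*} [Fintype 𝒮] [DecidableEq 𝒮] [Fintype 𝒯] [DecidableEq 𝒯]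
    [Fintype 𝒴] [DecidableEq 𝒴] [Fintype 𝒵] [DecidableEq 𝒵]
    (μ : Ω → ℝ) (hμ : IsPmf μ)
    (S : Ω → 𝒮) (T : Ω → 𝒯) (Yv : Ω → 𝒴) (Zv : Ω → 𝒵) :
    (1 / N) * condEnt μ S Zv ≤
      (1 / N) * cmi μ S Yv T - (1 / N) * cmi μ S Zv T +
        (1 / N) * condEnt μ (fun ω => (S ω, T ω)) Yv + (1 / N) * condEnt μ T Zv := by
  have hswap := condEnt_add_cmi_swap μ S Zv T
  have hchain := condEnt_eq_cmi_add_condEnt μ S Yv T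
  have hSYT := condEnt_prod_le_condEnt_prod μ S Yv T hμ.1
  have hSTZ := cmi_le_condEnt μ S T Zv hμ.1
  have key : condEnt μ S Zv ≤ cmi μ S Yv T - cmi μ S Zv T +
      condEnt μ (fun ω => (S ω, T ω)) Yv + condEnt μ T Zv := by
    linarith
  simp only [← mul_sub, ← mul_add]
  exact mul_le_mul_of_nonneg_left key (by positivity)

theorem stmt13 {Ω : Type*} [Fintype Ω] {N : ℕ} (hN : 0 < N)
    {𝒮 𝒯 𝒴 𝒵 : Type*} [Fintype 𝒮] [DecidableEq 𝒮] [Fintype 𝒯] [DecidableEq 𝒯]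
    [Fintype 𝒴] [DecidableEq 𝒴] [Fintype 𝒵] [DecidableEq 𝒵]
    (μ : Ω → ℝ) (hμ : IsPmf μ)
    (S : Ω → 𝒮) (T : Ω → 𝒯) (Yv : Ω → 𝒴) (Zv : Ω → 𝒵)
    (hST : IndepRV μ S T) :
    (1 / N) * condEnt μ S Zv ≤
      (1 / N) * cmi μ S Yv T - (1 / N) * cmi μ S Zv T +
        (1 / N) * condEnt μ (fun ω => (S ω, T ω)) Yv + (1 / N) * condEnt μ T Zv :=
  stmt13_general μ hμ S T Yv Zv
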